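/- arXiv:1208.2573 — 2 statements merged into one kernel-verified Lean document; each statement's English description precedes it below -/
import Mathlib

section
/- Let f : [a,b] → ℝ (a < b) be such that f′ is absolutely continuous on [a,b], f″ ∈ L¹[a,b], and |f″| is s-convex in the second sense on [a,b] for some fixed s ∈ (0,1]. Then |(1/(b−a))∫_a^b f(t) dt − f((a+b)/2)| ≤ ((b−a)²/(8(s+1)(s+2)(s+3)))[|f″(a)| + (s²+3s+2)|f″((a+b)/2)| + |f″(b)|]. -/
/-!
Integrating by parts twice on each half of `[a, b]` (with `m = (a + b) / 2`, `h = (b - a) / 2`)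
gives
`∫ f - (b - a) f(m) = ∫_a^m (t - a)² / 2 · f'' + ∫_m^b (t - b)² / 2 · f''`.
On each half, s-convexity bounds `|f''|` by the chord
`((m - t) / h)^s |f''(a)| + ((t - a) / h)^s |f''(m)|`, and the weights integrate to Beta-type
constants:
`∫₀¹ u² (1 - u)^s = 2 / ((s + 1)(s + 2)(s + 3))` and `∫₀¹ u^(s + 2) = 1 / (s + 3)`.
-/

open MeasureTheory

def SConvexOn (s : ℝ) (D : Set ℝ) (g : ℝ → ℝ) : Prop :=
  ∀ x ∈ D, ∀ y ∈ D, ∀ α β : ℝ, 0 ≤ α → 0 ≤ β → α + β = 1 →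
    g (α * x + β * y) ≤ α ^ s * g x + β ^ s * g y

open intervalIntegral Set

theorem SConvexOn.le_of_mem_Icc {s : ℝ} {D : Set ℝ} {g : ℝ → ℝ} (hg : SConvexOn s D g)
    {c d t : ℝ} (hc : c ∈ D) (hd : d ∈ D) (hcd : c < d) (ht : t ∈ Icc c d) :
    g t ≤ ((d - t) / (d - c)) ^ s * g c + ((t - c) / (d - c)) ^ s * g d := by
  have hdc : 0 < d - c := sub_pos.2 hcd
  have key := hg c hc d hd ((d - t) / (d - c)) ((t - c) / (d - c))
    (div_nonneg (sub_nonneg.2 ht.2) hdc.le) (div_nonneg (sub_nonneg.2 ht.1) hdc.le)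
    (by field_simp; ring)
  convert key using 2
  field_simp
  ring

theorem integral_sub_rpow {p : ℝ} (hp : -1 < p) (c d : ℝ) :
    ∫ t in c..d, (t - c) ^ p = (d - c) ^ (p + 1) / (p + 1) := by
  rw [integral_comp_sub_right (· ^ p), integral_rpow (Or.inl hp), sub_self,
    Real.zero_rpow (by linarith), sub_zero]

theorem integral_rsub_rpow {p : ℝ} (hp : -1 < p) (c d : ℝ) :
    ∫ t in c..d, (d - t) ^ p = (d - c) ^ (p + 1) / (p + 1) := by
  rw [integral_comp_sub_left (· ^ p), integral_rpow (Or.inl hp), sub_self,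
    Real.zero_rpow (by linarith), sub_zero]

theorem integral_sub_sq_mul_rsub_rpow {s : ℝ} (hs : -1 < s) {c d : ℝ} (hcd : c ≤ d) :
    ∫ t in c..d, (t - c) ^ 2 * (d - t) ^ s
      = 2 * (d - c) ^ (s + 3) / ((s + 1) * (s + 2) * (s + 3)) := by
  have hint : ∀ p : ℝ, -1 < p → IntervalIntegrable (fun t => (d - t) ^ p) volume c d :=
    fun p hp => by
      simpa using ((intervalIntegrable_rpow' hp (a := 0) (b := d - c)).comp_sub_left d).symm
  have hpow : ∀ {x : ℝ} (p : ℝ) (n : ℕ), 0 ≤ x → 0 < n → p = s + n →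
      x ^ p = x ^ s * x ^ n :=
    fun p n hx hn hp => hp ▸ Real.rpow_add_natCast' hx (by
      have : (1 : ℝ) ≤ n := mod_cast hn
      linarith)
  -- expand `(t - c) ^ 2 = ((d - c) - (d - t)) ^ 2`
  have expand : EqOn (fun t => (t - c) ^ 2 * (d - t) ^ s)
      (fun t => (d - c) ^ 2 * (d - t) ^ s - 2 * (d - c) * (d - t) ^ (s + 1) + (d - t) ^ (s + 2))
      (uIcc c d) := fun t ht => by
    have h : 0 ≤ d - t := sub_nonneg.2 (uIcc_of_le hcd ▸ ht).2
    simp only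
    rw [hpow (s + 1) 1 h one_pos (by simp), hpow (s + 2) 2 h two_pos (by simp)]
    ring
  have i0 := (hint s hs).const_mul ((d - c) ^ 2)
  have i1 := (hint (s + 1) (by linarith)).const_mul (2 * (d - c))
  have hdc : 0 ≤ d - c := sub_nonneg.2 hcd
  rw [integral_congr expand, integral_add (i0.sub i1) (hint _ (by linarith)), integral_sub i0 i1,
    intervalIntegral.integral_const_mul, intervalIntegral.integral_const_mul,
    integral_rsub_rpow hs, integral_rsub_rpow (by linarith), integral_rsub_rpow (by linarith),
    show s + 1 + 1 = s + 2 by ring, show s + 2 + 1 = s + 3 by ring, hpow (s + 1) 1 hdc one_pos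
    (by simp), hpow (s + 2) 2 hdc two_pos (by simp), hpow (s + 3) 3 hdc three_pos (by simp)]
  have : s + 1 ≠ 0 := by linarith
  have : s + 2 ≠ 0 := by linarith
  have : s + 3 ≠ 0 := by linarith
  field_simp
  ring

theorem abs_integral_sq_sub_left_mul_le {s c d A B : ℝ} {g : ℝ → ℝ} (hs : 0 ≤ s)
    (hcd : c < d) (hg : IntervalIntegrable g volume c d)
    (hbound : ∀ t ∈ Icc c d,
      |g t| ≤ ((d - t) / (d - c)) ^ s * A + ((t - c) / (d - c)) ^ s * B) :
    |∫ t in c..d, (t - c) ^ 2 / 2 * g t|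
      ≤ (d - c) ^ 3 * A / ((s + 1) * (s + 2) * (s + 3)) + (d - c) ^ 3 * B / (2 * (s + 3)) := by
  have hdc : 0 < d - c := sub_pos.2 hcd
  have hint : IntervalIntegrable (fun t => (t - c) ^ 2 / 2 * g t) volume c d :=
    hg.continuousOn_mul (by fun_prop)
  have hmaj : Continuous fun t =>
      (t - c) ^ 2 / 2 * (((d - t) / (d - c)) ^ s * A + ((t - c) / (d - c)) ^ s * B) := by
    fun_prop (disch := assumption)
  have hsplit : EqOn
      (fun t => (t - c) ^ 2 / 2 * (((d - t) / (d - c)) ^ s * A + ((t - c) / (d - c)) ^ s * B))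
      (fun t => A / (2 * (d - c) ^ s) * ((t - c) ^ 2 * (d - t) ^ s)
        + B / (2 * (d - c) ^ s) * (t - c) ^ (s + 2)) (uIcc c d) := fun t ht => by
    obtain ⟨htc, htd⟩ := uIcc_of_le hcd.le ▸ ht
    simp only
    rw [Real.div_rpow (sub_nonneg.2 htd) hdc.le, Real.div_rpow (sub_nonneg.2 htc) hdc.le,
      show s + 2 = s + (2 : ℕ) by norm_num,
      Real.rpow_add_natCast' (sub_nonneg.2 htc) (by simp; linarith)]
    field_simp
  calc |∫ t in c..d, (t - c) ^ 2 / 2 * g t|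
      ≤ ∫ t in c..d, |(t - c) ^ 2 / 2 * g t| := abs_integral_le_integral_abs hcd.le
    _ ≤ ∫ t in c..d,
          (t - c) ^ 2 / 2 * (((d - t) / (d - c)) ^ s * A + ((t - c) / (d - c)) ^ s * B) := by
        refine integral_mono_on hcd.le hint.abs (hmaj.intervalIntegrable c d) fun t ht => ?_
        rw [abs_mul, abs_of_nonneg (by positivity)]
        exact mul_le_mul_of_nonneg_left (hbound t ht) (by positivity)
    _ = A / (2 * (d - c) ^ s) * (2 * (d - c) ^ (s + 3) / ((s + 1) * (s + 2) * (s + 3)))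
          + B / (2 * (d - c) ^ s) * ((d - c) ^ (s + 2 + 1) / (s + 2 + 1)) := by
        have hbeta : Continuous fun t => (t - c) ^ 2 * (d - t) ^ s := by
          fun_prop (disch := assumption)
        have hpow : Continuous fun t => (t - c) ^ (s + 2) := by
          fun_prop (disch := positivity)
        rw [integral_congr hsplit, intervalIntegral.integral_add
            ((hbeta.intervalIntegrable c d).const_mul _)
            ((hpow.intervalIntegrable c d).const_mul _),
          intervalIntegral.integral_const_mul, intervalIntegral.integral_const_mul,
          integral_sub_sq_mul_rsub_rpow (by linarith) hcd.le, integral_sub_rpow (by linarith)]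
    _ = (d - c) ^ 3 * A / ((s + 1) * (s + 2) * (s + 3)) + (d - c) ^ 3 * B / (2 * (s + 3)) := by
        rw [show s + 2 + 1 = s + 3 by ring, Real.rpow_add hdc, Real.rpow_ofNat]
        field_simp

theorem abs_integral_sq_sub_right_mul_le {s c d A B : ℝ} {g : ℝ → ℝ} (hs : 0 ≤ s)
    (hcd : c < d) (hg : IntervalIntegrable g volume c d)
    (hbound : ∀ t ∈ Icc c d,
      |g t| ≤ ((d - t) / (d - c)) ^ s * A + ((t - c) / (d - c)) ^ s * B) :
    |∫ t in c..d, (t - d) ^ 2 / 2 * g t|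
      ≤ (d - c) ^ 3 * B / ((s + 1) * (s + 2) * (s + 3)) + (d - c) ^ 3 * A / (2 * (s + 3)) := by
  have hreflect := integral_comp_sub_left (fun t => (t - d) ^ 2 / 2 * g t) (c + d) (a := c) (b := d)
  simp only [add_sub_cancel_right, add_sub_cancel_left, show ∀ t, c + d - t - d = -(t - c) by
    intro t; ring, neg_sq] at hreflect
  rw [← hreflect]
  refine abs_integral_sq_sub_left_mul_le hs hcd (by simpa using (hg.comp_sub_left (c + d)).symm)
    fun t ⟨htc, htd⟩ => ?_
  have := hbound (c + d - t) ⟨by linarith, by linarith⟩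
  rwa [show d - (c + d - t) = t - c by ring, show c + d - t - c = d - t by ring,
    add_comm (_ * A)] at this

theorem integral_sq_sub_mul_eq_of_hasDerivAt {f f' f'' : ℝ → ℝ} {c d : ℝ} (x : ℝ)
    (hf' : ∀ t ∈ uIcc c d, HasDerivAt f (f' t) t)
    (hf'' : ∀ t ∈ uIcc c d, HasDerivAt f' (f'' t) t)
    (hint : IntervalIntegrable f'' volume c d) :
    ∫ t in c..d, (t - x) ^ 2 / 2 * f'' t
      = (d - x) ^ 2 / 2 * f' d - (c - x) ^ 2 / 2 * f' c - ((d - x) * f d - (c - x) * f c)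
        + ∫ t in c..d, f t := by
  have hf'int : IntervalIntegrable f' volume c d :=
    ContinuousOn.intervalIntegrable fun t ht => (hf'' t ht).continuousAt.continuousWithinAt
  have hweight : ∀ t, HasDerivAt (fun t => (t - x) ^ 2 / 2) (t - x) t := fun t => by
    simpa using (((hasDerivAt_id t).sub_const x).pow 2).div_const 2
  rw [integral_mul_deriv_eq_deriv_mul (fun t _ => hweight t) hf''
      ((continuous_sub_right x).intervalIntegrable c d) hint,
    integral_mul_deriv_eq_deriv_mul (fun t _ => (hasDerivAt_id' t).sub_const x) hf'
      (continuous_const.intervalIntegrable c d) hf'int]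
  simp only [one_mul]
  ring

theorem integral_sub_mul_midpoint_eq {f f' f'' : ℝ → ℝ} {a b : ℝ}
    (hf' : ∀ t ∈ uIcc a b, HasDerivAt f (f' t) t)
    (hf'' : ∀ t ∈ uIcc a b, HasDerivAt f' (f'' t) t)
    (hint : IntervalIntegrable f'' volume a b) :
    (∫ t in a..b, f t) - (b - a) * f ((a + b) / 2)
      = (∫ t in a..(a + b) / 2, (t - a) ^ 2 / 2 * f'' t)
        + ∫ t in (a + b) / 2..b, (t - b) ^ 2 / 2 * f'' t := by
  have hm : (a + b) / 2 ∈ uIcc a b := by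
    rcases le_total a b with h | h
    · exact uIcc_of_le h ▸ ⟨by linarith, by linarith⟩
    · exact uIcc_of_ge h ▸ ⟨by linarith, by linarith⟩
  have hleft := uIcc_subset_uIcc_left hm
  have hright := uIcc_subset_uIcc_right hm
  have hfint : ∀ {c d}, uIcc c d ⊆ uIcc a b → IntervalIntegrable f volume c d := fun h =>
    ContinuousOn.intervalIntegrable fun t ht => (hf' t (h ht)).continuousAt.continuousWithinAt
  rw [integral_sq_sub_mul_eq_of_hasDerivAt a (fun t ht => hf' t (hleft ht))
      (fun t ht => hf'' t (hleft ht)) (hint.mono_set hleft),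
    integral_sq_sub_mul_eq_of_hasDerivAt b (fun t ht => hf' t (hright ht))
      (fun t ht => hf'' t (hright ht)) (hint.mono_set hright),
    ← integral_add_adjacent_intervals (hfint hleft) (hfint hright)]
  ring

theorem stmt4_general (a b : ℝ) (hab : a < b) (f f' f'' : ℝ → ℝ)
    (hf' : ∀ t ∈ Set.Icc a b, HasDerivAt f (f' t) t)
    (hf'' : ∀ t ∈ Set.Icc a b, HasDerivAt f' (f'' t) t)
    (hint : IntervalIntegrable f'' volume a b)
    (s : ℝ) (hs0 : 0 < s)
    (hconv : SConvexOn s (Set.Icc a b) (fun t => |f'' t|)) :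
    |((1 / (b - a)) * ∫ t in a..b, f t) - f ((a + b) / 2)|
      ≤ (b - a) ^ 2 / (8 * (s + 1) * (s + 2) * (s + 3)) *
          (|f'' a| + (s ^ 2 + 3 * s + 2) * |f'' ((a + b) / 2)| + |f'' b|) := by
  have hba : 0 < b - a := sub_pos.2 hab
  have hI : uIcc a b = Icc a b := uIcc_of_le hab.le
  have ha : a ∈ Icc a b := left_mem_Icc.2 hab.le
  have hb : b ∈ Icc a b := right_mem_Icc.2 hab.le
  have hm : (a + b) / 2 ∈ Icc a b := ⟨by linarith, by linarith⟩
  have hkernel := integral_sub_mul_midpoint_eq (fun t ht => hf' t (hI ▸ ht))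
    (fun t ht => hf'' t (hI ▸ ht)) hint
  have hleft := abs_integral_sq_sub_left_mul_le hs0.le (by linarith)
    (hint.mono_set (uIcc_subset_uIcc_left (hI ▸ hm)))
    fun t => hconv.le_of_mem_Icc ha hm (by linarith)
  have hright := abs_integral_sq_sub_right_mul_le hs0.le (by linarith)
    (hint.mono_set (uIcc_subset_uIcc_right (hI ▸ hm)))
    fun t => hconv.le_of_mem_Icc hm hb (by linarith)
  have hbound := (abs_add_le _ _).trans (add_le_add hleft hright)
  rw [← hkernel] at hbound
  calc |((1 / (b - a)) * ∫ t in a..b, f t) - f ((a + b) / 2)|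
      = |(∫ t in a..b, f t) - (b - a) * f ((a + b) / 2)| / (b - a) := by
        rw [← abs_of_pos hba, ← abs_div, abs_of_pos hba]
        congr 1
        field_simp
    _ ≤ _ := div_le_div_of_nonneg_right hbound hba.le
    _ = _ := by
        field_simp
        ring

theorem stmt4 (a b : ℝ) (ha : 0 ≤ a) (hab : a < b) (f f' f'' : ℝ → ℝ)
    (hf' : ∀ t ∈ Set.Icc a b, HasDerivAt f (f' t) t)
    (hf'' : ∀ t ∈ Set.Icc a b, HasDerivAt f' (f'' t) t)
    (hint : IntervalIntegrable f'' volume a b)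
    (s : ℝ) (hs0 : 0 < s) (hs1 : s ≤ 1)
    (hconv : SConvexOn s (Set.Icc a b) (fun t => |f'' t|)) :
    |((1 / (b - a)) * ∫ t in a..b, f t) - f ((a + b) / 2)|
      ≤ (b - a) ^ 2 / (8 * (s + 1) * (s + 2) * (s + 3)) *
          (|f'' a| + (s ^ 2 + 3 * s + 2) * |f'' ((a + b) / 2)| + |f'' b|) :=
  stmt4_general a b hab f f' f'' hf' hf'' hint s hs0 hconv
end

section
/- Let f : [a,b] → ℝ (a < b) be such that f′ is absolutely continuous on [a,b], f″ ∈ L¹[a,b], and |f″|^q is s-concave in the second sense on [a,b] for some fixed s ∈ (0,1], where q > 1 and 1/p + 1/q = 1. If x ∈ [a, (a+b)/2] satisfies f′(x) = f′(a+b−x), then |(1/(b−a))∫_a^b f(t) dt − (1/2)[f(x)+f(a+b−x)]| ≤ (2^{(s−1)/q}/(2(b−a)(2p+1)^{1/p}))[(x−a)³(|f″((x+a)/2)| + |f″((a+2b−x)/2)|) + ((a+b−2x)³/4)|f″((a+b)/2)|]. -/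
open MeasureTheory

def SConcaveOn (s : ℝ) (D : Set ℝ) (g : ℝ → ℝ) : Prop :=
  ∀ x ∈ D, ∀ y ∈ D, ∀ α β : ℝ, 0 ≤ α → 0 ≤ β → α + β = 1 →
    α ^ s * g x + β ^ s * g y ≤ g (α * x + β * y)

/-!
With the Peano kernel `K(t) = (t - w)² / 2`, where `w` is `a`, `(a + b) / 2`, `b` on
`[a, x]`, `[x, a + b - x]`, `[a + b - x, b]` respectively, two integrations by parts give
`∫ₐᵇ f - (b - a)/2 · (f x + f (a + b - x)) = ∫ₐᵇ K f''`; the boundary terms in `f'` cancel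
because `f' x = f' (a + b - x)`. On each piece, Hölder's inequality bounds `∫ K |f''|` by
`‖K‖_p ‖f''‖_q`, and the Hermite–Hadamard inequality for the s-concave function `|f''|^q`
bounds `∫ |f''|^q` by `2^(s-1)` times the length of the piece times its value at the midpoint.
-/

open Set

section SConcave

variable {s : ℝ} {D : Set ℝ} {g : ℝ → ℝ}

theorem SConcaveOn.mono {E : Set ℝ} (hg : SConcaveOn s D g) (hED : E ⊆ D) :
    SConcaveOn s E g :=
  fun x hx y hy => hg x (hED hx) y (hED hy)

theorem SConcaveOn.add_le_two_rpow_mul_midpoint (hg : SConcaveOn s D g) {x y : ℝ}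
    (hx : x ∈ D) (hy : y ∈ D) : g x + g y ≤ 2 ^ s * g ((x + y) / 2) := by
  have h := hg x hx y hy 2⁻¹ 2⁻¹ (by norm_num) (by norm_num) (by norm_num)
  rw [Real.inv_rpow zero_le_two, ← mul_add, show 2⁻¹ * x + 2⁻¹ * y = (x + y) / 2 by ring] at h
  have h2s : 0 < (2 : ℝ) ^ s := Real.rpow_pos_of_pos two_pos s
  calc g x + g y = 2 ^ s * ((2 ^ s)⁻¹ * (g x + g y)) := by field_simp
    _ ≤ 2 ^ s * g ((x + y) / 2) := by gcongr

theorem SConcaveOn.le_two_mul_midpoint {a b t : ℝ} (hg : SConcaveOn s (Icc a b) g) (hs : s ≤ 1)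
    (hg0 : ∀ t ∈ Icc a b, 0 ≤ g t) (ht : t ∈ Icc a b) : g t ≤ 2 * g ((a + b) / 2) := by
  have hrefl : a + b - t ∈ Icc a b := ⟨by linarith [ht.2], by linarith [ht.1]⟩
  have hmid : (a + b) / 2 ∈ Icc a b := ⟨by linarith [ht.1, ht.2], by linarith [ht.1, ht.2]⟩
  have h2s : (2 : ℝ) ^ s ≤ 2 := by
    simpa using Real.rpow_le_rpow_of_exponent_le one_le_two hs
  calc g t ≤ g t + g (a + b - t) := le_add_of_nonneg_right (hg0 _ hrefl)
    _ ≤ 2 ^ s * g ((t + (a + b - t)) / 2) := hg.add_le_two_rpow_mul_midpoint ht hrefl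
    _ ≤ 2 * g ((a + b) / 2) := by
      rw [add_sub_cancel]
      gcongr
      exact hg0 _ hmid

theorem SConcaveOn.integral_le_two_rpow_mul_midpoint {u v : ℝ} (hg : SConcaveOn s (Icc u v) g)
    (huv : u ≤ v) (hgi : IntervalIntegrable g volume u v) :
    ∫ t in u..v, g t ≤ 2 ^ (s - 1) * (v - u) * g ((u + v) / 2) := by
  have hgi' : IntervalIntegrable (fun t => g (u + v - t)) volume u v := by
    simpa using (hgi.comp_sub_left (u + v)).symm
  have hrefl : ∫ t in u..v, g (u + v - t) = ∫ t in u..v, g t := by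
    simp [intervalIntegral.integral_comp_sub_left]
  have hsum : ∫ t in u..v, (g t + g (u + v - t)) ≤ ∫ _ in u..v, 2 ^ s * g ((u + v) / 2) :=
    intervalIntegral.integral_mono_on huv (hgi.add hgi') intervalIntegrable_const fun t ht => by
      have hrefl_mem : u + v - t ∈ Icc u v := ⟨by linarith [ht.2], by linarith [ht.1]⟩
      simpa using hg.add_le_two_rpow_mul_midpoint ht hrefl_mem
  rw [intervalIntegral.integral_add hgi hgi', hrefl, intervalIntegral.integral_const,
    smul_eq_mul] at hsum
  rw [Real.rpow_sub two_pos, Real.rpow_one]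
  linear_combination hsum / 2

end SConcave

theorem intervalIntegral.integral_mul_le_Lp_mul_Lq_of_nonneg {p q u v : ℝ}
    (hpq : p.HolderConjugate q) (huv : u ≤ v) {f g : ℝ → ℝ} (hf0 : ∀ t, 0 ≤ f t)
    (hg0 : ∀ t, 0 ≤ g t) (hf : MemLp f (ENNReal.ofReal p) (volume.restrict (Ioc u v)))
    (hg : MemLp g (ENNReal.ofReal q) (volume.restrict (Ioc u v))) :
    ∫ t in u..v, f t * g t
      ≤ (∫ t in u..v, f t ^ p) ^ (1 / p) * (∫ t in u..v, g t ^ q) ^ (1 / q) := by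
  simp only [intervalIntegral.integral_of_le huv]
  exact MeasureTheory.integral_mul_le_Lp_mul_Lq_of_nonneg hpq (Filter.Eventually.of_forall hf0)
    (Filter.Eventually.of_forall hg0) hf hg

theorem integral_sq_sub_left_div_two_rpow {p c d : ℝ} (hp : -1 < 2 * p) (hcd : c ≤ d) :
    ∫ t in c..d, ((t - c) ^ 2 / 2) ^ p = (d - c) ^ (2 * p + 1) / (2 * p + 1) / 2 ^ p := by
  have hpow : EqOn (fun t => ((t - c) ^ 2 / 2) ^ p) (fun t => (t - c) ^ (2 * p) / 2 ^ p)
      (uIcc c d) := by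
    intro t ht
    rw [uIcc_of_le hcd] at ht
    have htc : 0 ≤ t - c := sub_nonneg.mpr ht.1
    simp only
    rw [Real.div_rpow (sq_nonneg _) zero_le_two, ← Real.rpow_natCast, ← Real.rpow_mul htc]
    norm_num
  rw [intervalIntegral.integral_congr hpow, intervalIntegral.integral_div,
    intervalIntegral.integral_comp_sub_right (fun y => y ^ (2 * p)), sub_self,
    integral_rpow (Or.inl hp), Real.zero_rpow (by linarith), sub_zero]

theorem integral_sq_sub_right_div_two_rpow {p c d : ℝ} (hp : -1 < 2 * p) (hcd : c ≤ d) :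
    ∫ t in c..d, ((t - d) ^ 2 / 2) ^ p = (d - c) ^ (2 * p + 1) / (2 * p + 1) / 2 ^ p := by
  have hrefl : EqOn (fun t => ((t - d) ^ 2 / 2) ^ p) (fun t => (((c + d - t) - c) ^ 2 / 2) ^ p)
      (uIcc c d) := fun t _ => by
    simp only
    ring_nf
  rw [intervalIntegral.integral_congr hrefl,
    intervalIntegral.integral_comp_sub_left (fun y => ((y - c) ^ 2 / 2) ^ p), add_sub_cancel_right,
    add_sub_cancel_left, integral_sq_sub_left_div_two_rpow hp hcd]

theorem mul_rpow_one_div_mul_mul_rpow_one_div {p q c E B : ℝ} (hpq : p.HolderConjugate q)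
    (hc : 0 ≤ c) (hE : 0 ≤ E) (hB : 0 ≤ B) :
    (c * E) ^ (1 / p) * (c * B) ^ (1 / q) = c * (E ^ (1 / p) * B ^ (1 / q)) := by
  have hc1 : c ^ (1 / p) * c ^ (1 / q) = c := by
    rw [← Real.rpow_add' hc (by rw [hpq.one_div_add_one_div]; norm_num),
      hpq.one_div_add_one_div, div_one, Real.rpow_one]
  rw [Real.mul_rpow hc hE, Real.mul_rpow hc hB]
  linear_combination E ^ (1 / p) * B ^ (1 / q) * hc1

theorem kernel_holder_bound_eq {p q s X A : ℝ} (hpq : p.HolderConjugate q) (hX : 0 ≤ X)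
    (hA : 0 ≤ A) :
    (X ^ (2 * p + 1) / (2 * p + 1) / 2 ^ p) ^ (1 / p) * (2 ^ (s - 1) * X * A ^ q) ^ (1 / q)
      = 2 ^ ((s - 1) / q) / (2 * (2 * p + 1) ^ (1 / p)) * X ^ 3 * A := by
  have hp := hpq.pos
  have hq := hpq.symm.pos
  have h2p1 : 0 < 2 * p + 1 := by linarith
  have hXp : 0 ≤ X ^ (2 * p + 1) := Real.rpow_nonneg hX _
  have h2s : 0 ≤ (2 : ℝ) ^ (s - 1) := Real.rpow_nonneg zero_le_two _
  rw [Real.div_rpow (div_nonneg hXp h2p1.le) (Real.rpow_nonneg zero_le_two p),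
    Real.div_rpow hXp h2p1.le, Real.mul_rpow (mul_nonneg h2s hX) (Real.rpow_nonneg hA q),
    Real.mul_rpow h2s hX, ← Real.rpow_mul hX, ← Real.rpow_mul zero_le_two,
    ← Real.rpow_mul zero_le_two, ← Real.rpow_mul hA, mul_one_div_cancel hp.ne',
    mul_one_div_cancel hq.ne', Real.rpow_one, Real.rpow_one, mul_one_div (s - 1)]
  have hX3 : X ^ ((2 * p + 1) * (1 / p)) * X ^ (1 / q) = X ^ 3 := by
    have hexp : (2 * p + 1) * (1 / p) + 1 / q = 3 := by
      have h2 : (2 * p + 1) * (1 / p) = 2 + 1 / p := by field_simp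
      linarith [hpq.one_div_add_one_div]
    rw [← Real.rpow_add' hX (by rw [hexp]; norm_num), hexp]
    norm_cast
  linear_combination 2 ^ ((s - 1) / q) * A / (2 * (2 * p + 1) ^ (1 / p)) * hX3

theorem memLp_abs_of_sConcaveOn_abs_rpow {f'' : ℝ → ℝ} {s q u v : ℝ} (hq : 0 < q) (hs : s ≤ 1)
    (hint : IntervalIntegrable f'' volume u v)
    (hconc : SConcaveOn s (Icc u v) fun t => |f'' t| ^ q) :
    MemLp (fun t => |f'' t|) (ENNReal.ofReal q) (volume.restrict (Ioc u v)) := by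
  have : IsFiniteMeasure (volume.restrict (Ioc u v)) :=
    isFiniteMeasure_restrict.mpr measure_Ioc_lt_top.ne
  refine MemLp.of_bound hint.1.aestronglyMeasurable.norm ((2 * |f'' ((u + v) / 2)| ^ q) ^ (1 / q))
    (ae_restrict_of_forall_mem measurableSet_Ioc fun t ht => ?_)
  rw [Real.norm_eq_abs, abs_abs, ← Real.rpow_rpow_inv (abs_nonneg (f'' t)) hq.ne', ← one_div]
  gcongr
  exact hconc.le_two_mul_midpoint hs (fun t _ => by positivity) (Ioc_subset_Icc_self ht)

theorem abs_integral_sq_sub_div_two_mul_le {f'' : ℝ → ℝ} {s p q u v : ℝ} (w : ℝ)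
    (hpq : p.HolderConjugate q) (hs : s ≤ 1) (huv : u ≤ v)
    (hint : IntervalIntegrable f'' volume u v)
    (hconc : SConcaveOn s (Icc u v) fun t => |f'' t| ^ q) :
    |∫ t in u..v, (t - w) ^ 2 / 2 * f'' t|
      ≤ (∫ t in u..v, ((t - w) ^ 2 / 2) ^ p) ^ (1 / p)
        * (2 ^ (s - 1) * (v - u) * |f'' ((u + v) / 2)| ^ q) ^ (1 / q) := by
  have hq := hpq.symm.pos
  have hK0 : ∀ t, 0 ≤ (t - w) ^ 2 / 2 := fun t => by positivity
  have hKc : Continuous fun t : ℝ => (t - w) ^ 2 / 2 := by fun_prop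
  have : IsFiniteMeasure (volume.restrict (Ioc u v)) :=
    isFiniteMeasure_restrict.mpr measure_Ioc_lt_top.ne
  have hKmem : MemLp (fun t => (t - w) ^ 2 / 2) (ENNReal.ofReal p) (volume.restrict (Ioc u v)) := by
    obtain ⟨D, hD⟩ := isCompact_Icc.exists_bound_of_continuousOn (hKc.continuousOn (s := Icc u v))
    exact MemLp.of_bound hKc.aestronglyMeasurable D
      (ae_restrict_of_forall_mem measurableSet_Ioc fun t ht => hD t (Ioc_subset_Icc_self ht))
  have hf''mem := memLp_abs_of_sConcaveOn_abs_rpow hq hs hint hconc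
  have hgint : IntervalIntegrable (fun t => |f'' t| ^ q) volume u v := by
    rw [intervalIntegrable_iff_integrableOn_Ioc_of_le huv, IntegrableOn]
    simpa only [Real.norm_eq_abs, abs_abs, ENNReal.toReal_ofReal hq.le]
      using hf''mem.integrable_norm_rpow'
  calc |∫ t in u..v, (t - w) ^ 2 / 2 * f'' t| ≤ ∫ t in u..v, (t - w) ^ 2 / 2 * |f'' t| := by
        refine (intervalIntegral.abs_integral_le_integral_abs huv).trans_eq
          (intervalIntegral.integral_congr fun t _ => ?_)
        simp only [abs_mul, abs_of_nonneg (hK0 t)]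
    _ ≤ (∫ t in u..v, ((t - w) ^ 2 / 2) ^ p) ^ (1 / p) * (∫ t in u..v, |f'' t| ^ q) ^ (1 / q) :=
        intervalIntegral.integral_mul_le_Lp_mul_Lq_of_nonneg hpq huv hK0 (fun t => abs_nonneg _)
          hKmem hf''mem
    _ ≤ _ := by
        gcongr
        · exact Real.rpow_nonneg (intervalIntegral.integral_nonneg huv fun t _ => by positivity) _
        · exact intervalIntegral.integral_nonneg huv fun t _ => by positivity
        · exact hconc.integral_le_two_rpow_mul_midpoint huv hgint

theorem abs_integral_sq_sub_left_mul_le_s13 {f'' : ℝ → ℝ} {s p q u v : ℝ}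
    (hpq : p.HolderConjugate q) (hs : s ≤ 1) (huv : u ≤ v)
    (hint : IntervalIntegrable f'' volume u v)
    (hconc : SConcaveOn s (Icc u v) fun t => |f'' t| ^ q) :
    |∫ t in u..v, (t - u) ^ 2 / 2 * f'' t|
      ≤ 2 ^ ((s - 1) / q) / (2 * (2 * p + 1) ^ (1 / p)) * (v - u) ^ 3 * |f'' ((u + v) / 2)| := by
  have h := abs_integral_sq_sub_div_two_mul_le u hpq hs huv hint hconc
  rwa [integral_sq_sub_left_div_two_rpow (by linarith [hpq.pos]) huv,
    kernel_holder_bound_eq hpq (sub_nonneg.mpr huv) (abs_nonneg _)] at h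

theorem abs_integral_sq_sub_right_mul_le_s13 {f'' : ℝ → ℝ} {s p q u v : ℝ}
    (hpq : p.HolderConjugate q) (hs : s ≤ 1) (huv : u ≤ v)
    (hint : IntervalIntegrable f'' volume u v)
    (hconc : SConcaveOn s (Icc u v) fun t => |f'' t| ^ q) :
    |∫ t in u..v, (t - v) ^ 2 / 2 * f'' t|
      ≤ 2 ^ ((s - 1) / q) / (2 * (2 * p + 1) ^ (1 / p)) * (v - u) ^ 3 * |f'' ((u + v) / 2)| := by
  have h := abs_integral_sq_sub_div_two_mul_le v hpq hs huv hint hconc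
  rwa [integral_sq_sub_right_div_two_rpow (by linarith [hpq.pos]) huv,
    kernel_holder_bound_eq hpq (sub_nonneg.mpr huv) (abs_nonneg _)] at h

theorem abs_integral_sq_sub_midpoint_mul_le {f'' : ℝ → ℝ} {s p q u v : ℝ}
    (hpq : p.HolderConjugate q) (hs : s ≤ 1) (huv : u ≤ v)
    (hint : IntervalIntegrable f'' volume u v)
    (hconc : SConcaveOn s (Icc u v) fun t => |f'' t| ^ q) :
    |∫ t in u..v, (t - (u + v) / 2) ^ 2 / 2 * f'' t|
      ≤ 2 ^ ((s - 1) / q) / (2 * (2 * p + 1) ^ (1 / p)) * ((v - u) ^ 3 / 4)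
        * |f'' ((u + v) / 2)| := by
  have hp : -1 < 2 * p := by linarith [hpq.pos]
  have hKc : Continuous fun t : ℝ => ((t - (u + v) / 2) ^ 2 / 2) ^ p :=
    (by fun_prop : Continuous fun t : ℝ => (t - (u + v) / 2) ^ 2 / 2).rpow_const
      fun _ => Or.inr hpq.pos.le
  have hkernel : ∫ t in u..v, ((t - (u + v) / 2) ^ 2 / 2) ^ p
      = 2 * (((v - u) / 2) ^ (2 * p + 1) / (2 * p + 1) / 2 ^ p) := by
    rw [← intervalIntegral.integral_add_adjacent_intervals (b := (u + v) / 2)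
        (hKc.intervalIntegrable _ _) (hKc.intervalIntegrable _ _),
      integral_sq_sub_right_div_two_rpow hp (by linarith),
      integral_sq_sub_left_div_two_rpow hp (by linarith),
      show (u + v) / 2 - u = (v - u) / 2 by ring, show v - (u + v) / 2 = (v - u) / 2 by ring]
    ring
  have hhalf : 0 ≤ (v - u) / 2 := by linarith
  have h := abs_integral_sq_sub_div_two_mul_le ((u + v) / 2) hpq hs huv hint hconc
  rw [hkernel, show 2 ^ (s - 1) * (v - u) * |f'' ((u + v) / 2)| ^ q
      = 2 * (2 ^ (s - 1) * ((v - u) / 2) * |f'' ((u + v) / 2)| ^ q) by ring,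
    mul_rpow_one_div_mul_mul_rpow_one_div hpq zero_le_two
      (div_nonneg (div_nonneg (Real.rpow_nonneg hhalf _) (by linarith)) (by positivity))
      (mul_nonneg (mul_nonneg (Real.rpow_nonneg zero_le_two _) hhalf) (by positivity)),
    kernel_holder_bound_eq hpq hhalf (abs_nonneg _)] at h
  exact h.trans_eq (by ring)

theorem integral_sq_sub_div_two_mul_eq {f f' f'' : ℝ → ℝ} {u v : ℝ} (w : ℝ) (huv : u ≤ v)
    (hf' : ∀ t ∈ Icc u v, HasDerivAt f (f' t) t)
    (hf'' : ∀ t ∈ Icc u v, HasDerivAt f' (f'' t) t)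
    (hint : IntervalIntegrable f'' volume u v) :
    ∫ t in u..v, (t - w) ^ 2 / 2 * f'' t
      = (v - w) ^ 2 / 2 * f' v - (u - w) ^ 2 / 2 * f' u
        - ((v - w) * f v - (u - w) * f u) + ∫ t in u..v, f t := by
  rw [← uIcc_of_le huv] at hf' hf''
  have hK : ∀ t ∈ uIcc u v, HasDerivAt (fun t => (t - w) ^ 2 / 2) (t - w) t := fun t _ => by
    simpa using (((hasDerivAt_id t).sub_const w).pow 2).div_const 2
  have hf'int : IntervalIntegrable f' volume u v :=
    (HasDerivAt.continuousOn hf'').intervalIntegrable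
  rw [intervalIntegral.integral_mul_deriv_eq_deriv_mul hK hf''
      ((by fun_prop : Continuous fun t : ℝ => t - w).intervalIntegrable u v) hint,
    intervalIntegral.integral_mul_deriv_eq_deriv_mul (u' := fun _ => 1)
      (fun t _ => (hasDerivAt_id' t).sub_const w) hf' intervalIntegrable_const hf'int]
  simp only [one_mul]
  ring

theorem integral_sub_two_point_eq_sum_kernel {f f' f'' : ℝ → ℝ} {a b x : ℝ}
    (hf' : ∀ t ∈ Icc a b, HasDerivAt f (f' t) t)
    (hf'' : ∀ t ∈ Icc a b, HasDerivAt f' (f'' t) t)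
    (hint : IntervalIntegrable f'' volume a b) (hax : a ≤ x) (hxm : x ≤ (a + b) / 2)
    (hsym : f' x = f' (a + b - x)) :
    (∫ t in a..b, f t) - (b - a) / 2 * (f x + f (a + b - x))
      = (∫ t in a..x, (t - a) ^ 2 / 2 * f'' t)
        + (∫ t in x..a + b - x, (t - (a + b) / 2) ^ 2 / 2 * f'' t)
        + ∫ t in a + b - x..b, (t - b) ^ 2 / 2 * f'' t := by
  have hab : a ≤ b := by linarith
  have hfc : ContinuousOn f (Icc a b) := HasDerivAt.continuousOn hf'
  have restrict : ∀ u v : ℝ, a ≤ u → v ≤ b → u ≤ v →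
      (∀ t ∈ Icc u v, HasDerivAt f (f' t) t) ∧ (∀ t ∈ Icc u v, HasDerivAt f' (f'' t) t)
        ∧ IntervalIntegrable f'' volume u v ∧ IntervalIntegrable f volume u v :=
    fun u v hau hvb huv =>
      have hsub : Icc _ _ ⊆ Icc a b := Icc_subset_Icc hau hvb
      ⟨fun t ht => hf' t (hsub ht), fun t ht => hf'' t (hsub ht),
        hint.mono_set (by rwa [uIcc_of_le huv, uIcc_of_le hab]),
        (hfc.mono hsub).intervalIntegrable_of_Icc huv⟩
  obtain ⟨hf'₁, hf''₁, hint₁, hfint₁⟩ := restrict a x le_rfl (by linarith) hax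
  obtain ⟨hf'₂, hf''₂, hint₂, hfint₂⟩ := restrict x (a + b - x) hax (by linarith) (by linarith)
  obtain ⟨hf'₃, hf''₃, hint₃, hfint₃⟩ := restrict (a + b - x) b (by linarith) le_rfl (by linarith)
  rw [integral_sq_sub_div_two_mul_eq a hax hf'₁ hf''₁ hint₁,
    integral_sq_sub_div_two_mul_eq ((a + b) / 2) (by linarith) hf'₂ hf''₂ hint₂,
    integral_sq_sub_div_two_mul_eq b (by linarith) hf'₃ hf''₃ hint₃,
    ← intervalIntegral.integral_add_adjacent_intervals (hfint₁.trans hfint₂) hfint₃,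
    ← intervalIntegral.integral_add_adjacent_intervals hfint₁ hfint₂, hsym]
  ring

theorem abs_sum_integral_kernel_mul_le {f'' : ℝ → ℝ} {a b x s p q : ℝ}
    (hpq : p.HolderConjugate q) (hs : s ≤ 1) (hint : IntervalIntegrable f'' volume a b)
    (hconc : SConcaveOn s (Icc a b) fun t => |f'' t| ^ q) (hax : a ≤ x) (hxm : x ≤ (a + b) / 2) :
    |(∫ t in a..x, (t - a) ^ 2 / 2 * f'' t)
        + (∫ t in x..a + b - x, (t - (a + b) / 2) ^ 2 / 2 * f'' t)
        + ∫ t in a + b - x..b, (t - b) ^ 2 / 2 * f'' t|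
      ≤ 2 ^ ((s - 1) / q) / (2 * (2 * p + 1) ^ (1 / p)) *
          ((x - a) ^ 3 * (|f'' ((x + a) / 2)| + |f'' ((a + 2 * b - x) / 2)|)
            + (a + b - 2 * x) ^ 3 / 4 * |f'' ((a + b) / 2)|) := by
  have restrict : ∀ u v : ℝ, a ≤ u → v ≤ b → u ≤ v →
      IntervalIntegrable f'' volume u v ∧ SConcaveOn s (Icc u v) fun t => |f'' t| ^ q :=
    fun u v hau hvb huv =>
      have hsub : Icc u v ⊆ Icc a b := Icc_subset_Icc hau hvb
      ⟨hint.mono_set (by rwa [uIcc_of_le huv, uIcc_of_le (hau.trans (huv.trans hvb))]),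
        hconc.mono hsub⟩
  obtain ⟨hint₁, hconc₁⟩ := restrict a x le_rfl (by linarith) hax
  obtain ⟨hint₂, hconc₂⟩ := restrict x (a + b - x) hax (by linarith) (by linarith)
  obtain ⟨hint₃, hconc₃⟩ := restrict (a + b - x) b (by linarith) le_rfl (by linarith)
  have E₁ := abs_integral_sq_sub_left_mul_le_s13 hpq hs hax hint₁ hconc₁
  have E₂ := abs_integral_sq_sub_midpoint_mul_le hpq hs (by linarith) hint₂ hconc₂
  have E₃ := abs_integral_sq_sub_right_mul_le_s13 hpq hs (by linarith) hint₃ hconc₃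
  rw [show (a + x) / 2 = (x + a) / 2 by ring] at E₁
  rw [show (x + (a + b - x)) / 2 = (a + b) / 2 by ring,
    show a + b - x - x = a + b - 2 * x by ring] at E₂
  rw [show (a + b - x + b) / 2 = (a + 2 * b - x) / 2 by ring,
    show b - (a + b - x) = x - a by ring] at E₃
  linarith [abs_add_three (∫ t in a..x, (t - a) ^ 2 / 2 * f'' t)
    (∫ t in x..a + b - x, (t - (a + b) / 2) ^ 2 / 2 * f'' t)
    (∫ t in a + b - x..b, (t - b) ^ 2 / 2 * f'' t)]

theorem stmt13_general (a b : ℝ) (hab : a < b) (f f' f'' : ℝ → ℝ)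
    (hf' : ∀ t ∈ Set.Icc a b, HasDerivAt f (f' t) t)
    (hf'' : ∀ t ∈ Set.Icc a b, HasDerivAt f' (f'' t) t)
    (hint : IntervalIntegrable f'' volume a b)
    (s : ℝ) (hs1 : s ≤ 1)
    (p q : ℝ) (hp : 1 < p) (hpq : 1 / p + 1 / q = 1)
    (hconc : SConcaveOn s (Set.Icc a b) (fun t => |f'' t| ^ q)) :
    ∀ x ∈ Set.Icc a ((a + b) / 2), f' x = f' (a + b - x) →
      |((1 / (b - a)) * ∫ t in a..b, f t) - (1 / 2) * (f x + f (a + b - x))|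
        ≤ (2 : ℝ) ^ ((s - 1) / q) / (2 * (b - a) * (2 * p + 1) ^ (1 / p)) *
          ((x - a) ^ 3 * (|f'' ((x + a) / 2)| + |f'' ((a + 2 * b - x) / 2)|)
            + (a + b - 2 * x) ^ 3 / 4 * |f'' ((a + b) / 2)|) := by
  intro x ⟨hax, hxm⟩ hsym
  have hpq' : p.HolderConjugate q :=
    Real.holderConjugate_iff.mpr ⟨hp, by simpa only [one_div] using hpq⟩
  have hba : 0 < b - a := sub_pos.mpr hab
  have hlhs : (1 / (b - a) * ∫ t in a..b, f t) - 1 / 2 * (f x + f (a + b - x))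
      = 1 / (b - a) * ((∫ t in a..b, f t) - (b - a) / 2 * (f x + f (a + b - x))) := by
    field_simp
  have hconst : (2 : ℝ) ^ ((s - 1) / q) / (2 * (b - a) * (2 * p + 1) ^ (1 / p))
      = 1 / (b - a) * (2 ^ ((s - 1) / q) / (2 * (2 * p + 1) ^ (1 / p))) := by
    field_simp
  rw [hlhs, integral_sub_two_point_eq_sum_kernel hf' hf'' hint hax hxm hsym, abs_mul,
    abs_of_pos (one_div_pos.mpr hba), hconst, mul_assoc]
  gcongr
  exact abs_sum_integral_kernel_mul_le hpq' hs1 hint hconc hax hxm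

theorem stmt13 (a b : ℝ) (ha : 0 ≤ a) (hab : a < b) (f f' f'' : ℝ → ℝ)
    (hf' : ∀ t ∈ Set.Icc a b, HasDerivAt f (f' t) t)
    (hf'' : ∀ t ∈ Set.Icc a b, HasDerivAt f' (f'' t) t)
    (hint : IntervalIntegrable f'' volume a b)
    (s : ℝ) (hs0 : 0 < s) (hs1 : s ≤ 1)
    (p q : ℝ) (hp : 1 < p) (hq : 1 < q) (hpq : 1 / p + 1 / q = 1)
    (hconc : SConcaveOn s (Set.Icc a b) (fun t => |f'' t| ^ q)) :
    ∀ x ∈ Set.Icc a ((a + b) / 2), f' x = f' (a + b - x) →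
      |((1 / (b - a)) * ∫ t in a..b, f t) - (1 / 2) * (f x + f (a + b - x))|
        ≤ (2 : ℝ) ^ ((s - 1) / q) / (2 * (b - a) * (2 * p + 1) ^ (1 / p)) *
          ((x - a) ^ 3 * (|f'' ((x + a) / 2)| + |f'' ((a + 2 * b - x) / 2)|)
            + (a + b - 2 * x) ^ 3 / 4 * |f'' ((a + b) / 2)|) :=
  stmt13_general a b hab f f' f'' hf' hf'' hint s hs1 p q hp hpq hconc
end
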